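/- Let β be any ordinal and consider the membership structure V_β whose underlying set is the collection of all sets x ∈ ZFSet with rank(x) < β, equipped with the true membership relation ∈, viewed as a structure for the first-order language of set theory with a single binary relation symbol. Then there exists a countable transitive set U ∈ ZFSet with rank(U) < ω₁ (so U ∈ V_{ω₁}) such that the membership structure on U (underlying set the members of U, relation the true membership relation) is elementarily equivalent to V_β: for every sentence φ of the language of set theory, φ holds in the membership structure on U if and only if φ holds in V_β. In particular, if V_β is a model of any set of sentences (such as the axioms of the reduced set theory RST), then so is U. -/

import Mathlib

open FirstOrder Ordinal

/-- The relations of the first-order language of set theory: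
a single binary relation symbol for membership. -/
inductive setTheoryRel : ℕ → Type
  | mem : setTheoryRel 2

/-- The first-order language of set theory: no function symbols and one binary relation symbol. -/
def setTheoryLang : FirstOrder.Language :=
  ⟨fun _ => Empty, setTheoryRel⟩

/-- The membership structure on a subcollection `S` of `ZFSet`: the underlying type is `S` and
the binary relation symbol is interpreted as true set membership. -/
def memStructure (S : Set ZFSet) : setTheoryLang.Structure S where
  funMap := fun f _ => f.elim
  RelMap := fun r x =>
    match r with
    | .mem => (x 0 : ZFSet) ∈ (x 1 : ZFSet)

/-- Satisfaction of a sentence of the language of set theory in the membership structure on a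
subcollection `S` of `ZFSet`. -/
def memSat (S : Set ZFSet) (φ : setTheoryLang.Sentence) : Prop :=
  @FirstOrder.Language.Sentence.Realize setTheoryLang S (memStructure S) φ

/-!
Take a countable elementary substructure `S` of `V_β` (downward Löwenheim–Skolem). Membership on
`S` is well-founded, being the restriction of `∈`, and extensional, since extensionality is a
sentence true in `V_β`. The Mostowski collapse of `S` is therefore an isomorphism onto a countable
transitive set `U`, and a countable set all of whose members have rank `< ω₁` has rank `< ω₁`
because `ω₁` has uncountable cofinality.
-/

universe u v w

open FirstOrder FirstOrder.Language Cardinal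

instance (n : ℕ) : Subsingleton (setTheoryRel n) :=
  ⟨by rintro ⟨⟩ ⟨⟩; rfl⟩

instance : Countable setTheoryLang.Symbols :=
  inferInstanceAs (Countable ((Σ _ : ℕ, Empty) ⊕ Σ n, setTheoryRel n))

theorem FirstOrder.Language.exists_countable_elementarySubstructure (L : Language.{u, v})
    [Countable L.Symbols] (M : Type w) [L.Structure M] :
    ∃ S : L.ElementarySubstructure M, Countable S := by
  by_cases hM : Countable M
  · exact ⟨⊤, inferInstance⟩
  · obtain ⟨S, -, hS⟩ := exists_elementarySubstructure_card_eq L (∅ : Set M) ℵ₀ le_rfl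
      (by simp) (by rw [lift_aleph0, lift_le_aleph0]; exact mk_le_aleph0)
      (by simpa using (not_le.1 (mt mk_le_aleph0_iff.1 hM)).le)
    exact ⟨S, mk_le_aleph0_iff.1 (lift_le.1 hS.le |>.trans (by simp))⟩

-- `setTheoryRel.mem` typed as a symbol of `setTheoryLang`; the two types agree only up to
-- unfolding `setTheoryLang`, which blocks the `realize` simp lemmas.
def memSymbol : setTheoryLang.Relations 2 :=
  setTheoryRel.mem

def memRel {M : Type*} [setTheoryLang.Structure M] (x y : M) : Prop :=
  Structure.RelMap memSymbol ![x, y]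

def extensionalitySentence : setTheoryLang.Sentence :=
  ∀' ∀' ((∀' (memSymbol.boundedFormula₂ &2 &0 ⇔ memSymbol.boundedFormula₂ &2 &1)) ⟹
    (&0 =' &1))

theorem realize_extensionalitySentence {M : Type*} [setTheoryLang.Structure M] :
    M ⊨ extensionalitySentence ↔ ∀ x y : M, (∀ z, memRel z x ↔ memRel z y) → x = y := by
  simp [extensionalitySentence, Sentence.Realize, Formula.Realize, memRel, Fin.snoc]

theorem memSat_extensionalitySentence {S : Set ZFSet.{u}} (hS : ∀ x ∈ S, ∀ z ∈ x, z ∈ S) :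
    memSat S extensionalitySentence := by
  let := memStructure S
  refine realize_extensionalitySentence.2 fun x y h => Subtype.ext (ZFSet.ext fun z => ?_)
  exact ⟨fun hz => (h ⟨z, hS x x.2 z hz⟩).1 hz, fun hz => (h ⟨z, hS y y.2 z hz⟩).2 hz⟩

theorem memSat_iff_of_equiv {M : Type*} [setTheoryLang.Structure M] {S : Set ZFSet.{u}}
    (e : M ≃ S) (he : ∀ x y, memRel x y ↔ (e x : ZFSet) ∈ (e y : ZFSet))
    (φ : setTheoryLang.Sentence) : memSat S φ ↔ M ⊨ φ := by
  let := memStructure S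
  let g : M ≃[setTheoryLang] S :=
    { e with
      map_fun' := fun f _ => f.elim
      map_rel' := by
        rintro _ ⟨⟩ x
        have hx : ![x 0, x 1] = x := by ext i; fin_cases i <;> rfl
        exact (he (x 0) (x 1)).symm.trans (iff_of_eq (congrArg _ hx)) }
  exact (StrongHomClass.realize_sentence g φ).symm

theorem ZFSet.rank_range_lt_omega_one {α : Type*} [Countable α] [Small.{u} α]
    {f : α → ZFSet.{u}} (hf : ∀ a, rank (f a) < ω₁) : rank (ZFSet.range f) < ω₁ := by
  rw [rank_range]
  exact Ordinal.iSup_lt_omega_one fun a => (Cardinal.isSuccLimit_omega 1).succ_lt (hf a)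

namespace WellFounded

variable {α : Type*} {r : α → α → Prop}

noncomputable def mostowskiCollapse (hr : WellFounded r) [Small.{u} α] : α → ZFSet.{u} :=
  hr.fix fun a IH => ZFSet.range fun b : {b // r b a} => IH b b.2

variable (hr : WellFounded r) [Small.{u} α]

theorem mostowskiCollapse_eq (a : α) :
    hr.mostowskiCollapse a = ZFSet.range fun b : {b // r b a} => hr.mostowskiCollapse b :=
  hr.fix_eq _ a

theorem mem_mostowskiCollapse {a : α} {z : ZFSet.{u}} :
    z ∈ hr.mostowskiCollapse a ↔ ∃ b, r b a ∧ hr.mostowskiCollapse b = z := by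
  rw [mostowskiCollapse_eq]
  simp

theorem mostowskiCollapse_mem {a b : α} (h : r a b) :
    hr.mostowskiCollapse a ∈ hr.mostowskiCollapse b :=
  hr.mem_mostowskiCollapse.2 ⟨a, h, rfl⟩

theorem mostowskiCollapse_injective (hext : ∀ a b, (∀ c, r c a ↔ r c b) → a = b) :
    Function.Injective hr.mostowskiCollapse := by
  intro a
  induction a using hr.induction with
  | _ a ih =>
    intro b hab
    refine hext a b fun c => ⟨fun hc => ?_, fun hc => ?_⟩
    · obtain ⟨d, hd, hdc⟩ := hr.mem_mostowskiCollapse.1 (hab ▸ hr.mostowskiCollapse_mem hc)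
      rwa [ih c hc hdc.symm]
    · obtain ⟨d, hd, hdc⟩ := hr.mem_mostowskiCollapse.1 (hab ▸ hr.mostowskiCollapse_mem hc)
      rwa [← ih d hd hdc]

theorem mostowskiCollapse_mem_iff (hext : ∀ a b, (∀ c, r c a ↔ r c b) → a = b) {a b : α} :
    hr.mostowskiCollapse a ∈ hr.mostowskiCollapse b ↔ r a b := by
  refine ⟨fun h => ?_, hr.mostowskiCollapse_mem⟩
  obtain ⟨c, hc, hca⟩ := hr.mem_mostowskiCollapse.1 h
  rwa [← hr.mostowskiCollapse_injective hext hca]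

theorem isTransitive_range_mostowskiCollapse :
    (ZFSet.range hr.mostowskiCollapse).IsTransitive := by
  intro x hx y hy
  obtain ⟨a, rfl⟩ := ZFSet.mem_range.1 hx
  obtain ⟨b, -, rfl⟩ := hr.mem_mostowskiCollapse.1 hy
  exact ZFSet.mem_range_self b

theorem rank_mostowskiCollapse_lt_omega_one [Countable α] (a : α) :
    (hr.mostowskiCollapse a).rank < ω₁ := by
  induction a using hr.induction with
  | _ a ih =>
    rw [mostowskiCollapse_eq]
    exact ZFSet.rank_range_lt_omega_one fun b => ih b b.2

end WellFounded

theorem exists_isTransitive_memSat_iff {M : Type*} [setTheoryLang.Structure M] [Countable M]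
    (hwf : WellFounded (memRel (M := M))) (hext : M ⊨ extensionalitySentence) :
    ∃ U : ZFSet.{u}, U.IsTransitive ∧ U.toSet.Countable ∧ U.rank < ω₁ ∧
      ∀ φ, memSat U.toSet φ ↔ M ⊨ φ := by
  have : Small.{u} M := Countable.toSmall M
  have hext := realize_extensionalitySentence.1 hext
  set U := ZFSet.range hwf.mostowskiCollapse
  have hU : U.toSet = Set.range hwf.mostowskiCollapse := ZFSet.coe_range _
  refine ⟨U, hwf.isTransitive_range_mostowskiCollapse, hU ▸ Set.countable_range _,
    ZFSet.rank_range_lt_omega_one hwf.rank_mostowskiCollapse_lt_omega_one, fun φ => ?_⟩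
  let e := (Equiv.ofInjective _ (hwf.mostowskiCollapse_injective hext)).trans
    (Equiv.setCongr hU.symm)
  exact memSat_iff_of_equiv e (fun x y => (hwf.mostowskiCollapse_mem_iff hext).symm) φ

/-- For every ordinal `β`, the membership structure `V_β` (on the sets of rank `< β`) has a
countable transitive set `U` with `rank U < ω₁` (so `U ∈ V_{ω₁}`) whose membership structure is
elementarily equivalent to `V_β`. In particular any theory modeled by `V_β` is modeled by `U`. -/
theorem exists_countable_transitive_elementarilyEquivalent_V (β : Ordinal) :
    ∃ U : ZFSet, U.IsTransitive ∧ U.toSet.Countable ∧ U.rank < ω₁ ∧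
      ∀ φ : setTheoryLang.Sentence,
        memSat U.toSet φ ↔ memSat {x : ZFSet | x.rank < β} φ := by
  set V := {x : ZFSet | x.rank < β}
  let := memStructure V
  obtain ⟨S, hS⟩ := exists_countable_elementarySubstructure setTheoryLang V
  have hwf : WellFounded (memRel (M := S)) :=
    InvImage.wf (fun x : S => ((x : V) : ZFSet)) ZFSet.mem_wf
  have hext : S ⊨ extensionalitySentence := (S.realize_sentence _).2 <|
    memSat_extensionalitySentence fun x hx z hz => (ZFSet.rank_lt_of_mem hz).trans hx
  obtain ⟨U, hUt, hUc, hUr, hU⟩ := exists_isTransitive_memSat_iff hwf hext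
  exact ⟨U, hUt, hUc, hUr, fun φ => (hU φ).trans (S.realize_sentence φ)⟩
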